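/- Let μ = N(m₁, I_n), let A, C be symmetric positive definite matrices simultaneously diagonalized by an orthogonal matrix P (A = PᵀΛP, C = PᵀDP), and let b, d ∈ ℝⁿ. Define S(x) = Ax + b and σ = N(Cm₁ + d, C²). Then the compatibility condition holds: T_σ^{S_♯μ} = S ∘ T_σ^{μ}, where T_σ^{μ}(x) = C^{−1}(x − d) and T_σ^{S_♯μ}(x) = AC^{−1}(x − d) + b. -/

import Mathlib

open MeasureTheory

/-- Squared Euclidean transport cost on `ℝⁿ × ℝⁿ`. -/
noncomputable def cost2 {n : ℕ} (p : (Fin n → ℝ) × (Fin n → ℝ)) : ℝ :=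
  ∑ i, (p.1 i - p.2 i) ^ 2

/-- The set of couplings of two measures on `ℝⁿ`. -/
def couplings {n : ℕ} (μ ν : Measure (Fin n → ℝ)) :
    Set (Measure ((Fin n → ℝ) × (Fin n → ℝ))) :=
  {π | π.map Prod.fst = μ ∧ π.map Prod.snd = ν}

/-- The Wasserstein-2 distance (for the quadratic Euclidean cost) between two measures
on `ℝⁿ`. -/
noncomputable def W2 {n : ℕ} (μ ν : Measure (Fin n → ℝ)) : ℝ :=
  Real.sqrt (sInf ((fun π => ∫ p, cost2 p ∂π) '' couplings μ ν))

/-- `T` is an optimal transport map from `μ` to `ν` for the quadratic cost: it pushes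
`μ` forward to `ν` and its transport cost realizes the squared Wasserstein-2 distance. -/
noncomputable def IsOptimalMap {n : ℕ} (μ ν : Measure (Fin n → ℝ))
    (T : (Fin n → ℝ) → (Fin n → ℝ)) : Prop :=
  Measurable T ∧ μ.map T = ν ∧ ∫ x, cost2 (T x, x) ∂μ = (W2 μ ν) ^ 2

open Matrix

/-- The Gaussian measure `N(m, S)` on `ℝⁿ`, defined via its density with respect to
Lebesgue measure. -/
noncomputable def gaussianMeasure {n : ℕ} (m : Fin n → ℝ) (S : Matrix (Fin n) (Fin n) ℝ) :
    Measure (Fin n → ℝ) :=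
  volume.withDensity fun x => ENNReal.ofReal
    ((Real.sqrt ((2 * Real.pi) ^ n * S.det))⁻¹ *
      Real.exp (-(dotProduct (x - m) (S⁻¹.mulVec (x - m))) / 2))

/-! Both transport maps have the form `T x = M (x - d) + b` with `M` symmetric positive definite
(`M = C⁻¹`, resp. `M = A C⁻¹`, which is positive definite because `A` and `C` are diagonal in the
same orthonormal basis). For such a map Young's inequality `2 ⟪u, v⟫ ≤ ⟪u, M u⟫ + ⟪v, M⁻¹ v⟫`,
with equality when `v = M u`, splits `|x - y|²` as `g x + h y` plus a nonnegative remainder that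
vanishes on the graph of `T`; integrating against an arbitrary coupling shows that the graph
coupling is optimal. The push-forward identities come from `x ↦ C x + d` mapping `N(m₁, I)` to
`N(C m₁ + d, C²)`, and the second moments needed for integrability from writing `N(m₁, I)` as a
product of one-dimensional Gaussians. -/

open ProbabilityTheory

section SecondMoments

variable {α ι : Type*} [MeasurableSpace α] {μ : Measure α} [Fintype ι]

lemma MeasureTheory.MemLp.integrable_dotProduct {f g : α → ι → ℝ} (hf : MemLp f 2 μ)
    (hg : MemLp g 2 μ) : Integrable (fun a => f a ⬝ᵥ g a) μ :=
  integrable_finsetSum _ fun i _ => (hf.eval i).integrable_mul (hg.eval i)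

lemma MeasureTheory.MemLp.mulVec [DecidableEq ι] {p : ENNReal} {f : α → ι → ℝ}
    (hf : MemLp f p μ) (M : Matrix ι ι ℝ) : MemLp (fun a => M *ᵥ f a) p μ :=
  (LinearMap.toContinuousLinearMap (Matrix.toLin' M)).comp_memLp' hf

end SecondMoments

section Young

variable {ι : Type*} [Fintype ι]

lemma Matrix.IsHermitian.mulVec_dotProduct {M : Matrix ι ι ℝ} (hM : M.IsHermitian)
    (u w : ι → ℝ) : (M *ᵥ u) ⬝ᵥ w = u ⬝ᵥ (M *ᵥ w) := by
  rw [dotProduct_comm, dotProduct_mulVec, ← mulVec_transpose, show Mᵀ = M from IsSymm.eq hM,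
    dotProduct_comm]

lemma Matrix.PosDef.two_mul_dotProduct_le [DecidableEq ι] {M : Matrix ι ι ℝ} (hM : M.PosDef)
    (u v : ι → ℝ) : 2 * (u ⬝ᵥ v) ≤ u ⬝ᵥ (M *ᵥ u) + v ⬝ᵥ (M⁻¹ *ᵥ v) := by
  have hdet : IsUnit M.det := (isUnit_iff_isUnit_det M).1 hM.isUnit
  have hMinv : M⁻¹ * M = 1 := nonsing_inv_mul M hdet
  have h := hM.inv.posSemidef.dotProduct_mulVec_nonneg (M *ᵥ u - v)
  rw [star_trivial, mulVec_sub, mulVec_mulVec, hMinv, one_mulVec] at h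
  simp only [sub_dotProduct, dotProduct_sub, hM.isHermitian.mulVec_dotProduct] at h
  rw [dotProduct_comm v u, mulVec_mulVec, mul_nonsing_inv M hdet, one_mulVec] at h
  linarith

end Young

section Kantorovich

variable {n : ℕ}

lemma cost2_eq_dotProduct (x y : Fin n → ℝ) : cost2 (x, y) = (x - y) ⬝ᵥ (x - y) := by
  simp [cost2, dotProduct, sq]

lemma cost2_swap (x y : Fin n → ℝ) : cost2 (y, x) = cost2 (x, y) := by
  simp only [cost2]; exact Finset.sum_congr rfl fun i _ => by ring

lemma integrable_cost2_of_mem_couplings {μ ν : Measure (Fin n → ℝ)}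
    {π : Measure ((Fin n → ℝ) × (Fin n → ℝ))} (hπ : π ∈ couplings μ ν)
    (hμ : MemLp id 2 μ) (hν : MemLp id 2 ν) : Integrable cost2 π := by
  have h1 : MemLp Prod.fst 2 π :=
    (memLp_map_measure_iff (by rw [hπ.1]; exact hμ.1) measurable_fst.aemeasurable).1 (hπ.1 ▸ hμ)
  have h2 : MemLp Prod.snd 2 π :=
    (memLp_map_measure_iff (by rw [hπ.2]; exact hν.1) measurable_snd.aemeasurable).1 (hπ.2 ▸ hν)
  convert (h1.sub h2).integrable_dotProduct (h1.sub h2) with p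
  exact cost2_eq_dotProduct p.1 p.2

lemma W2_sq_eq_of_isLeast {μ ν : Measure (Fin n → ℝ)} {c : ℝ}
    (h : IsLeast ((fun π => ∫ p, cost2 p ∂π) '' couplings μ ν) c) : W2 μ ν ^ 2 = c := by
  obtain ⟨π, -, rfl⟩ := h.1
  rw [W2, h.csInf_eq, Real.sq_sqrt]
  exact integral_nonneg fun p => Finset.sum_nonneg fun i _ => sq_nonneg _

lemma map_prodMk_mem_couplings (σ : Measure (Fin n → ℝ)) {T : (Fin n → ℝ) → (Fin n → ℝ)}
    (hT : Measurable T) : σ.map (fun x => (x, T x)) ∈ couplings σ (σ.map T) := by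
  have hgraph : Measurable fun x => (x, T x) := measurable_id.prodMk hT
  refine ⟨?_, ?_⟩
  · rw [Measure.map_map measurable_fst hgraph]; exact Measure.map_id
  · rw [Measure.map_map measurable_snd hgraph]; rfl

lemma integral_add_integral_le_integral_cost2 {μ ν : Measure (Fin n → ℝ)}
    {π : Measure ((Fin n → ℝ) × (Fin n → ℝ))} (hπ : π ∈ couplings μ ν)
    {g h : (Fin n → ℝ) → ℝ} (hg : Integrable g μ) (hh : Integrable h ν)
    (hcost : Integrable cost2 π) (hle : ∀ x y, g x + h y ≤ cost2 (x, y)) :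
    ∫ x, g x ∂μ + ∫ y, h y ∂ν ≤ ∫ p, cost2 p ∂π := by
  obtain ⟨rfl, rfl⟩ := hπ
  have hg' : Integrable (fun p => g p.1) π := hg.comp_measurable measurable_fst
  have hh' : Integrable (fun p => h p.2) π := hh.comp_measurable measurable_snd
  rw [integral_map measurable_fst.aemeasurable hg.1, integral_map measurable_snd.aemeasurable hh.1,
    ← integral_add hg' hh']
  exact integral_mono (hg'.add hh') hcost fun p => hle p.1 p.2

theorem isOptimalMap_of_potentials {σ : Measure (Fin n → ℝ)} {T : (Fin n → ℝ) → (Fin n → ℝ)}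
    (hT : Measurable T) (hσ : MemLp id 2 σ) (hν : MemLp id 2 (σ.map T))
    {g h : (Fin n → ℝ) → ℝ} (hg : Integrable g σ) (hh : Integrable h (σ.map T))
    (hle : ∀ x y, g x + h y ≤ cost2 (x, y)) (heq : ∀ x, g x + h (T x) = cost2 (x, T x)) :
    IsOptimalMap σ (σ.map T) T := by
  have hgraph : Measurable fun x => (x, T x) := measurable_id.prodMk hT
  have hcoupling := map_prodMk_mem_couplings σ hT
  have hcost_graph : ∫ p, cost2 p ∂σ.map (fun x => (x, T x)) = ∫ x, cost2 (T x, x) ∂σ := by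
    rw [integral_map hgraph.aemeasurable (integrable_cost2_of_mem_couplings hcoupling hσ hν).1]
    exact integral_congr_ae (.of_forall fun x => cost2_swap _ _)
  have hdual : ∫ x, g x ∂σ + ∫ y, h y ∂σ.map T = ∫ x, cost2 (T x, x) ∂σ := by
    have hhT : Integrable (fun x => h (T x)) σ := hh.comp_measurable hT
    rw [integral_map hT.aemeasurable hh.1, ← integral_add hg hhT]
    exact integral_congr_ae (.of_forall fun x => (heq x).trans (cost2_swap _ _).symm)
  refine ⟨hT, rfl, (W2_sq_eq_of_isLeast ⟨⟨_, hcoupling, hcost_graph⟩, ?_⟩).symm⟩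
  rintro _ ⟨π, hπ, rfl⟩
  exact hdual ▸ integral_add_integral_le_integral_cost2 hπ hg hh
    (integrable_cost2_of_mem_couplings hπ hσ hν) hle

end Kantorovich

section Affine

variable {n : ℕ}

/-- Up to a constant, `|x|² - 2 φ x` for the convex potential
`φ x = ⟪x - p, Q (x - p)⟫ / 2 + ⟪q, x⟫` whose gradient is the map `x ↦ Q (x - p) + q`. -/
def quadraticPotential (Q : Matrix (Fin n) (Fin n) ℝ) (p q x : Fin n → ℝ) : ℝ :=
  x ⬝ᵥ x - (x - p) ⬝ᵥ (Q *ᵥ (x - p)) - 2 * (q ⬝ᵥ x) + p ⬝ᵥ q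

lemma cost2_eq_quadraticPotential_add (Q Q' : Matrix (Fin n) (Fin n) ℝ) (p q x y : Fin n → ℝ) :
    cost2 (x, y) = quadraticPotential Q p q x + quadraticPotential Q' q p y +
      ((x - p) ⬝ᵥ (Q *ᵥ (x - p)) + (y - q) ⬝ᵥ (Q' *ᵥ (y - q)) - 2 * ((x - p) ⬝ᵥ (y - q))) := by
  have hcost : cost2 (x, y) = x ⬝ᵥ x - 2 * (x ⬝ᵥ y) + y ⬝ᵥ y := by
    rw [cost2_eq_dotProduct]
    simp only [sub_dotProduct, dotProduct_sub, dotProduct_comm y x]; ring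
  have hcross : (x - p) ⬝ᵥ (y - q) = x ⬝ᵥ y - q ⬝ᵥ x - p ⬝ᵥ y + p ⬝ᵥ q := by
    simp only [sub_dotProduct, dotProduct_sub, dotProduct_comm x q]; ring
  rw [hcost, hcross, quadraticPotential, quadraticPotential, dotProduct_comm q p]
  ring

lemma integrable_quadraticPotential {μ : Measure (Fin n → ℝ)} [IsFiniteMeasure μ]
    (hμ : MemLp id 2 μ) (Q : Matrix (Fin n) (Fin n) ℝ) (p q : Fin n → ℝ) :
    Integrable (quadraticPotential Q p q) μ := by
  have hp : MemLp (fun x => x - p) 2 μ := hμ.sub (memLp_const p)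
  exact (((hμ.integrable_dotProduct hμ).sub (hp.integrable_dotProduct (hp.mulVec Q))).sub
    (((memLp_const q).integrable_dotProduct hμ).const_mul 2)).add (integrable_const _)

theorem isOptimalMap_affine {σ : Measure (Fin n → ℝ)} [IsFiniteMeasure σ] (hσ : MemLp id 2 σ)
    {M : Matrix (Fin n) (Fin n) ℝ} (hM : M.PosDef) (d b : Fin n → ℝ) :
    IsOptimalMap σ (σ.map fun x => M *ᵥ (x - d) + b) (fun x => M *ᵥ (x - d) + b) := by
  set T : (Fin n → ℝ) → (Fin n → ℝ) := fun x => M *ᵥ (x - d) + b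
  have hTσ : MemLp T 2 σ := ((hσ.sub (memLp_const d)).mulVec M).add (memLp_const b)
  have hT : Measurable T := by fun_prop
  have hν : MemLp id 2 (σ.map T) := (memLp_map_measure_iff (by fun_prop) hT.aemeasurable).2 hTσ
  refine isOptimalMap_of_potentials hT hσ hν (integrable_quadraticPotential hσ M d b)
    (integrable_quadraticPotential hν M⁻¹ b d) (fun x y => ?_) (fun x => ?_)
  · rw [cost2_eq_quadraticPotential_add M M⁻¹ d b x y]
    linarith [hM.two_mul_dotProduct_le (x - d) (y - b)]
  · have hTx : T x - b = M *ᵥ (x - d) := add_sub_cancel_right _ _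
    have hMinv : M⁻¹ * M = 1 := nonsing_inv_mul M ((isUnit_iff_isUnit_det M).1 hM.isUnit)
    rw [cost2_eq_quadraticPotential_add M M⁻¹ d b x (T x), hTx, mulVec_mulVec, hMinv,
      one_mulVec, dotProduct_comm (M *ᵥ (x - d))]
    ring

end Affine

section GaussianMap

variable {n : ℕ}

lemma map_volume_withDensity_affine {B : Matrix (Fin n) (Fin n) ℝ} (hB : B.det ≠ 0)
    (t : Fin n → ℝ) {f : (Fin n → ℝ) → ENNReal} (hf : Measurable f) :
    (volume.withDensity f).map (fun x => B *ᵥ x + t) =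
      volume.withDensity fun y => ENNReal.ofReal |B.det|⁻¹ * f (B⁻¹ *ᵥ (y - t)) := by
  have hS : Measurable fun x : Fin n → ℝ => B *ᵥ x + t := by fun_prop
  have hg : Measurable fun y : Fin n → ℝ => f (B⁻¹ *ᵥ (y - t)) := hf.comp (by fun_prop)
  have hvolume : volume.map (fun x : Fin n → ℝ => B *ᵥ x + t) =
      ENNReal.ofReal |B.det|⁻¹ • volume := by
    have hcomp : (fun x : Fin n → ℝ => B *ᵥ x + t) = (· + t) ∘ Matrix.toLin' B := by
      funext x; simp [Matrix.toLin'_apply]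
    rw [hcomp, ← Measure.map_map (measurable_add_const t) (by fun_prop),
      Real.map_matrix_volume_pi_eq_smul_volume_pi hB, Measure.map_smul,
      map_add_right_eq_self, abs_inv]
  have hinv : ∀ x : Fin n → ℝ, B⁻¹ *ᵥ (B *ᵥ x + t - t) = x := fun x => by
    rw [add_sub_cancel_right, mulVec_mulVec, nonsing_inv_mul _ (isUnit_iff_ne_zero.2 hB),
      one_mulVec]
  ext s hs
  rw [Measure.map_apply hS hs, withDensity_apply _ (hS hs), withDensity_apply _ hs,
    lintegral_const_mul _ hg, ← smul_eq_mul, ← lintegral_smul_measure, ← Measure.restrict_smul,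
    ← hvolume, setLIntegral_map hs hg hS]
  simp only [hinv]

theorem gaussianMeasure_map_affine {B : Matrix (Fin n) (Fin n) ℝ} (hB : B.det ≠ 0)
    (m t : Fin n → ℝ) (V : Matrix (Fin n) (Fin n) ℝ) :
    (gaussianMeasure m V).map (fun x => B *ᵥ x + t) =
      gaussianMeasure (B *ᵥ m + t) (B * V * Bᵀ) := by
  rw [gaussianMeasure, map_volume_withDensity_affine hB t (by fun_prop), gaussianMeasure]
  congr 1
  funext y
  set w := B⁻¹ *ᵥ (y - t) - m
  have hUB : IsUnit B.det := isUnit_iff_ne_zero.2 hB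
  have hy : y - (B *ᵥ m + t) = B *ᵥ w := by
    rw [mulVec_sub, mulVec_mulVec, mul_nonsing_inv _ hUB, one_mulVec]; abel
  have hquad : (B *ᵥ w) ⬝ᵥ ((B * V * Bᵀ)⁻¹ *ᵥ (B *ᵥ w)) = w ⬝ᵥ (V⁻¹ *ᵥ w) := by
    have hUBt : IsUnit Bᵀ.det := by rwa [det_transpose]
    rw [Matrix.mul_inv_rev, Matrix.mul_inv_rev, ← mulVec_mulVec, ← mulVec_mulVec,
      mulVec_mulVec (v := w) B⁻¹ B, nonsing_inv_mul _ hUB, one_mulVec, dotProduct_mulVec,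
      ← vecMul_transpose, vecMul_vecMul, mul_nonsing_inv _ hUBt, vecMul_one]
  have hsqrt : Real.sqrt ((2 * Real.pi) ^ n * (B * V * Bᵀ).det) =
      Real.sqrt ((2 * Real.pi) ^ n * V.det) * |B.det| := by
    rw [det_mul, det_mul, det_transpose, ← Real.sqrt_sq_eq_abs, ← Real.sqrt_mul' _ (sq_nonneg _)]
    ring_nf
  rw [hy, hquad, hsqrt, ← ENNReal.ofReal_mul (by positivity), ← mul_assoc, mul_inv]
  ring_nf

lemma map_mulVec_sub_map_mulVec_add (μ : Measure (Fin n → ℝ)) {B : Matrix (Fin n) (Fin n) ℝ}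
    (hB : IsUnit B.det) (t : Fin n → ℝ) :
    (μ.map fun x => B *ᵥ x + t).map (fun x => B⁻¹ *ᵥ (x - t)) = μ := by
  rw [Measure.map_map (by fun_prop) (by fun_prop)]
  convert Measure.map_id
  funext x
  simp [mulVec_mulVec, nonsing_inv_mul _ hB]

end GaussianMap

section StandardGaussian

variable {n : ℕ}

lemma gaussianDensity_one_eq_prod (m x : Fin n → ℝ) :
    (Real.sqrt ((2 * Real.pi) ^ n * (1 : Matrix (Fin n) (Fin n) ℝ).det))⁻¹ *
      Real.exp (-(dotProduct (x - m) ((1 : Matrix (Fin n) (Fin n) ℝ)⁻¹.mulVec (x - m))) / 2) =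
      ∏ i, gaussianPDFReal (m i) 1 (x i) := by
  have hsqrt : Real.sqrt ((2 * Real.pi) ^ n) = Real.sqrt (2 * Real.pi) ^ n :=
    (Real.sqrt_eq_iff_eq_sq (by positivity) (by positivity)).2 (by
      rw [← pow_mul, mul_comm n, pow_mul, Real.sq_sqrt (by positivity)])
  simp only [gaussianPDFReal_def, Finset.prod_mul_distrib, ← Real.exp_sum, det_one, mul_one,
    inv_one, one_mulVec, NNReal.coe_one, Finset.prod_const, Finset.card_univ, Fintype.card_fin,
    hsqrt, inv_pow, dotProduct, Pi.sub_apply, Finset.sum_div, Finset.sum_neg_distrib, neg_div, sq]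

theorem gaussianMeasure_one_eq_pi (m : Fin n → ℝ) :
    gaussianMeasure m 1 = Measure.pi fun i => gaussianReal (m i) 1 := by
  refine (Measure.pi_eq fun s hs => ?_).symm
  have hint : Integrable (fun x : Fin n → ℝ => ∏ i, gaussianPDFReal (m i) 1 (x i))
      (volume.restrict (Set.univ.pi s)) := by
    rw [volume_pi, Measure.restrict_pi_pi]
    exact Integrable.fintype_prod fun i => (integrable_gaussianPDFReal _ _).restrict
  simp_rw [gaussianMeasure, withDensity_apply _ (MeasurableSet.univ_pi hs),
    gaussianDensity_one_eq_prod, gaussianReal_apply_eq_integral _ one_ne_zero,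
    ← ENNReal.ofReal_prod_of_nonneg fun i _ => setIntegral_nonneg (hs i) fun x _ =>
      gaussianPDFReal_nonneg _ _ _, ← ofReal_integral_eq_lintegral_ofReal hint
      (.of_forall fun x => Finset.prod_nonneg fun i _ => gaussianPDFReal_nonneg _ _ _)]
  rw [volume_pi, Measure.restrict_pi_pi, integral_fintype_prod_eq_prod]

instance isProbabilityMeasure_gaussianMeasure_one (m : Fin n → ℝ) :
    IsProbabilityMeasure (gaussianMeasure m 1) := by
  rw [gaussianMeasure_one_eq_pi]; infer_instance

lemma memLp_id_gaussianMeasure_one (m : Fin n → ℝ) : MemLp id 2 (gaussianMeasure m 1) := by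
  rw [gaussianMeasure_one_eq_pi]
  refine memLp_pi_iff.2 fun i =>
    (memLp_map_measure_iff aestronglyMeasurable_id (measurable_pi_apply i).aemeasurable).1 ?_
  rw [(measurePreserving_eval _ i).map_eq]
  exact memLp_id_gaussianReal 2

end StandardGaussian

section SimultaneousDiagonalization

variable {ι : Type*} [Fintype ι] [DecidableEq ι] {P : Matrix ι ι ℝ}

lemma conj_diagonal_mul (hP : Pᵀ * P = 1) (v w : ι → ℝ) :
    (Pᵀ * diagonal v * P) * (Pᵀ * diagonal w * P) = Pᵀ * diagonal (v * w) * P := by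
  rw [Matrix.mul_assoc, ← Matrix.mul_assoc P, ← Matrix.mul_assoc P, mul_eq_one_comm.1 hP,
    Matrix.one_mul, ← Matrix.mul_assoc, Matrix.mul_assoc _ (diagonal v), diagonal_mul_diagonal]
  rfl

lemma conj_diagonal_inv (hP : Pᵀ * P = 1) {w : ι → ℝ} (hw : ∀ i, w i ≠ 0) :
    (Pᵀ * diagonal w * P)⁻¹ = Pᵀ * diagonal w⁻¹ * P := by
  refine inv_eq_left_inv ?_
  rw [conj_diagonal_mul hP, show w⁻¹ * w = fun _ => 1 from funext fun i => inv_mul_cancel₀ (hw i),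
    diagonal_one, Matrix.mul_one, hP]

lemma posDef_conj_diagonal (hP : Pᵀ * P = 1) {w : ι → ℝ} (hw : ∀ i, 0 < w i) :
    (Pᵀ * diagonal w * P).PosDef := by
  have hPunit : IsUnit P := .of_mul_eq_one_right Pᵀ hP
  rw [← conjTranspose_eq_transpose_of_trivial, ← star_eq_conjTranspose,
    IsUnit.posDef_star_left_conjugate_iff hPunit]
  exact PosDef.diagonal hw

lemma posDef_conj_diagonal_mul_inv (hP : Pᵀ * P = 1) {v w : ι → ℝ} (hv : ∀ i, 0 < v i)
    (hw : ∀ i, 0 < w i) : ((Pᵀ * diagonal v * P) * (Pᵀ * diagonal w * P)⁻¹).PosDef := by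
  rw [conj_diagonal_inv hP fun i => (hw i).ne', conj_diagonal_mul hP]
  exact posDef_conj_diagonal hP fun i => mul_pos (hv i) (inv_pos.2 (hw i))

end SimultaneousDiagonalization

/-- Compatibility for Gaussians with commuting shears: let `μ = N(m₁, I)`, let `A, C` be
symmetric positive definite matrices simultaneously diagonalized by an orthogonal matrix
`P` (`A = PᵀΛP`, `C = PᵀDP` with `Λ, D` diagonal with positive entries), `S(x) = Ax + b`,
and `σ = N(Cm₁ + d, C²)`. Then `T_σ^μ(x) = C⁻¹(x − d)`, `T_σ^{S_♯μ}(x) = AC⁻¹(x − d) + b`,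
and the compatibility condition `T_σ^{S_♯μ} = S ∘ T_σ^μ` holds. -/
theorem gaussian_shear_compatibility {n : ℕ} (m₁ b d : Fin n → ℝ)
    (P L D A C : Matrix (Fin n) (Fin n) ℝ)
    (hP : Pᵀ * P = 1)
    (hL : L.IsDiag) (hLpos : ∀ i, 0 < L i i)
    (hD : D.IsDiag) (hDpos : ∀ i, 0 < D i i)
    (hA : A = Pᵀ * L * P) (hC : C = Pᵀ * D * P) :
    IsOptimalMap (gaussianMeasure (C.mulVec m₁ + d) (C * C)) (gaussianMeasure m₁ 1)
      (fun x => C⁻¹.mulVec (x - d)) ∧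
    IsOptimalMap (gaussianMeasure (C.mulVec m₁ + d) (C * C))
      ((gaussianMeasure m₁ 1).map (fun x => A.mulVec x + b))
      (fun x => A.mulVec (C⁻¹.mulVec (x - d)) + b) ∧
    (fun x => A.mulVec (C⁻¹.mulVec (x - d)) + b) =
      (fun x => A.mulVec x + b) ∘ (fun x => C⁻¹.mulVec (x - d)) := by
  rw [← hL.diagonal_diag] at hA
  rw [← hD.diagonal_diag] at hC
  have hCpos : C.PosDef := hC ▸ posDef_conj_diagonal hP hDpos
  have hACpos : (A * C⁻¹).PosDef := hA ▸ hC ▸ posDef_conj_diagonal_mul_inv hP hLpos hDpos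
  have hCdet : IsUnit C.det := (isUnit_iff_isUnit_det C).1 hCpos.isUnit
  set μ := gaussianMeasure m₁ 1
  have hσ : gaussianMeasure (C *ᵥ m₁ + d) (C * C) = μ.map fun x => C *ᵥ x + d := by
    rw [gaussianMeasure_map_affine hCdet.ne_zero, Matrix.mul_one,
      show Cᵀ = C from IsSymm.eq hCpos.isHermitian]
  have hσ₂ : MemLp id 2 (μ.map fun x => C *ᵥ x + d) :=
    (memLp_map_measure_iff (by fun_prop) (by fun_prop)).2
      ((memLp_id_gaussianMeasure_one m₁).mulVec C |>.add (memLp_const d))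
  have hT₁ := map_mulVec_sub_map_mulVec_add μ hCdet d
  rw [hσ]
  refine ⟨?_, ?_, rfl⟩
  · simpa only [add_zero, hT₁] using isOptimalMap_affine hσ₂ hCpos.inv d 0
  · have hT₂ : (μ.map fun x => C *ᵥ x + d).map (fun x => A *ᵥ (C⁻¹ *ᵥ (x - d)) + b) =
        μ.map fun x => A *ᵥ x + b :=
      (Measure.map_map (g := fun x => A *ᵥ x + b) (f := fun x => C⁻¹ *ᵥ (x - d))
        (by fun_prop) (by fun_prop)).symm.trans (congrArg _ hT₁)
    simpa only [← mulVec_mulVec, hT₂] using isOptimalMap_affine hσ₂ hACpos d b
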